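/- arXiv:2403.10080 — 6 statements merged into one kernel-verified Lean document; each statement's English description precedes it below -/
import Mathlib

section
/- Fix $n \in \mathbb{Z}$ nonzero such that $\Delta_n(t) = nt^2-(2n+1)t+n$ is irreducible over $\mathbb{Q}$. Let $a = \frac{(2n+1)+\sqrt{4n+1}}{2}$ and $\xi = \frac{1+\sqrt{4n+1}}{2}$. Then the ring homomorphism $f\colon \mathbb{Z}[t,t^{-1}] \to \mathbb{Z}[1/n, \xi]$ determined by $t \mapsto a/n$ is well-defined, surjective, and has kernel exactly the ideal $(\Delta_n)$. In particular, $f$ induces a ring isomorphism $\mathbb{Z}[t,t^{-1}]/(\Delta_n) \cong \mathbb{Z}[1/n,\xi]$. -/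
open LaurentPolynomial in
/-- `Δₙ = n t² - (2n+1) t + n` as a Laurent polynomial over `ℤ`. -/
noncomputable def DeltaL (n : ℤ) : LaurentPolynomial ℤ :=
  LaurentPolynomial.C n * T 2 - LaurentPolynomial.C (2 * n + 1) * T 1 + LaurentPolynomial.C n

/-- `Δₙ` as a polynomial over `ℚ` (for the irreducibility hypothesis). -/
noncomputable def DeltaQ (n : ℤ) : Polynomial ℚ :=
  Polynomial.C (n : ℚ) * Polynomial.X ^ 2 - Polynomial.C ((2 * n + 1 : ℤ) : ℚ) * Polynomial.X +
    Polynomial.C (n : ℚ)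

/-- The quadratic field `K = ℚ(√(4n+1))`, realized as `ℚ[X]/(X² - (4n+1))`. -/
abbrev K5 (n : ℤ) := AdjoinRoot ((Polynomial.X : Polynomial ℚ) ^ 2 - Polynomial.C ((4 * n + 1 : ℤ) : ℚ))

/-- The square root `s = √(4n+1)` in `K`. -/
noncomputable abbrev s5 (n : ℤ) : K5 n := AdjoinRoot.root _

/-- `ξ = (1 + √(4n+1))/2`. -/
noncomputable abbrev xi5 (n : ℤ) : K5 n := algebraMap ℚ (K5 n) (1 / 2) * (1 + s5 n)

/-- `a = ((2n+1) + √(4n+1))/2`. -/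
noncomputable abbrev a5 (n : ℤ) : K5 n :=
  algebraMap ℚ (K5 n) (1 / 2) * (algebraMap ℚ (K5 n) ((2 * n + 1 : ℤ) : ℚ) + s5 n)

/-- The subring `ℤ[1/n, ξ]` of `K`. -/
noncomputable abbrev R5 (n : ℤ) : Subring (K5 n) :=
  Subring.closure {algebraMap ℚ (K5 n) ((n : ℚ)⁻¹), xi5 n}

/-! The element `t = a/n = 1 + ξ/n` has inverse `ā/n = 1 + (1 - ξ)/n` in `ℤ[1/n, ξ]`, because
`ξ² = ξ + n`; so `t ↦ a/n` defines the map, and it is onto since `1/n = t + t⁻¹ - 2` and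
`ξ = n t - n`. As `ℤ[t,t⁻¹]` is a localization of `ℤ[t]`, the kernel is generated by the kernel on
`ℤ[t]`. An integer polynomial vanishing at `a/n` is divisible by `Δₙ` over `ℚ`, since `Δₙ` is
irreducible with root `a/n`, and hence over `ℤ` by Gauss's lemma, `Δₙ` being primitive. -/

open Polynomial LaurentPolynomial

theorem LaurentPolynomial.ker_eq_span_toLaurent {R S : Type*} [CommSemiring R] [Semiring S]
    (g : R[T;T⁻¹] →+* S) {q : R[X]} (hq : RingHom.ker (g.comp toLaurent) = Ideal.span {q}) :
    RingHom.ker g = Ideal.span {toLaurent q} := by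
  have h : algebraMap R[X] R[T;T⁻¹] = toLaurent := RingHom.ext algebraMap_eq_toLaurent
  rw [← IsLocalization.map_under (Submonoid.powers (X : R[X])) R[T;T⁻¹] (RingHom.ker g),
    Ideal.under, RingHom.comap_ker, h, hq, Ideal.map_span, Set.image_singleton]

theorem Polynomial.ker_eq_span_of_isPrimitive {A : Type*} [CommRing A] [Algebra ℚ A]
    [Nontrivial A] (φ : ℤ[X] →+* A) {q : ℤ[X]} (hq : q.IsPrimitive)
    (hirr : Irreducible (q.map (Int.castRingHom ℚ))) (hφq : φ q = 0) :
    RingHom.ker φ = Ideal.span {q} := by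
  have hφ (p : ℤ[X]) : φ p = aeval (φ X) (p.map (Int.castRingHom ℚ)) := by
    rw [← algebraMap_int_eq, aeval_map_algebraMap]
    exact (aeval_X_left_apply p ▸ aeval_algHom_apply φ.toIntAlgHom X p).symm
  ext p
  rw [RingHom.mem_ker, Ideal.mem_span_singleton,
    IsPrimitive.Int.dvd_iff_map_cast_dvd_map_cast _ _ hq, hφ,
    ← hirr.dvd_iff_aeval_eq_zero (by rw [← hφ, hφq])]

section QuadraticOrder

variable {n : ℤ}

lemma s5_sq (n : ℤ) : s5 n ^ 2 = 4 * n + 1 := by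
  have h := AdjoinRoot.eval₂_root ((X : ℚ[X]) ^ 2 - Polynomial.C ((4 * n + 1 : ℤ) : ℚ))
  rw [Polynomial.eval₂_sub, Polynomial.eval₂_X_pow, Polynomial.eval₂_C, sub_eq_zero,
    AdjoinRoot.of, RingHom.comp_apply] at h
  simpa [map_ofNat] using h

lemma two_mul_algebraMap_half (n : ℤ) : 2 * algebraMap ℚ (K5 n) (1 / 2) = 1 := by
  rw [← map_ofNat (algebraMap ℚ (K5 n)) 2, ← map_mul]
  norm_num

lemma algebraMap_inv_mul_self (hn : n ≠ 0) : algebraMap ℚ (K5 n) (n : ℚ)⁻¹ * n = 1 := by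
  rw [← map_intCast (algebraMap ℚ (K5 n)), ← map_mul, inv_mul_cancel₀ (by exact_mod_cast hn),
    map_one]

lemma xi5_sq (n : ℤ) : xi5 n ^ 2 = xi5 n + n := by
  linear_combination (algebraMap ℚ (K5 n) (1 / 2)) ^ 2 * s5_sq n +
    (algebraMap ℚ (K5 n) (1 / 2) * (1 + s5 n) + n * (2 * algebraMap ℚ (K5 n) (1 / 2) + 1)) *
      two_mul_algebraMap_half n

lemma a5_eq (n : ℤ) : a5 n = n + xi5 n := by
  have h : algebraMap ℚ (K5 n) ((2 * n + 1 : ℤ) : ℚ) = 2 * n + 1 := by simp [map_ofNat]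
  rw [a5, h]
  linear_combination n * two_mul_algebraMap_half n

lemma xi5_mem_R5 (n : ℤ) : xi5 n ∈ R5 n :=
  Subring.subset_closure (Set.mem_insert_of_mem _ rfl)

lemma algebraMap_inv_mem_R5 (n : ℤ) : algebraMap ℚ (K5 n) (n : ℚ)⁻¹ ∈ R5 n :=
  Subring.subset_closure (Set.mem_insert _ _)

noncomputable def t5 (n : ℤ) : K5 n := algebraMap ℚ (K5 n) (n : ℚ)⁻¹ * a5 n

noncomputable def t5Inv (n : ℤ) : K5 n := 1 + algebraMap ℚ (K5 n) (n : ℚ)⁻¹ * (1 - xi5 n)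

lemma t5_eq (hn : n ≠ 0) : t5 n = 1 + algebraMap ℚ (K5 n) (n : ℚ)⁻¹ * xi5 n := by
  rw [t5, a5_eq]
  linear_combination algebraMap_inv_mul_self hn

lemma t5_mul_t5Inv (hn : n ≠ 0) : t5 n * t5Inv n = 1 := by
  rw [t5_eq hn, t5Inv]
  linear_combination -(algebraMap ℚ (K5 n) (n : ℚ)⁻¹) ^ 2 * xi5_sq n -
    algebraMap ℚ (K5 n) (n : ℚ)⁻¹ * algebraMap_inv_mul_self hn

lemma t5_quadratic_eq_zero (hn : n ≠ 0) : n * t5 n ^ 2 - (2 * n + 1) * t5 n + n = 0 := by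
  set x := algebraMap ℚ (K5 n) (n : ℚ)⁻¹
  rw [t5_eq hn]
  linear_combination n * x ^ 2 * xi5_sq n + (x * xi5 n + n * x + 1) * algebraMap_inv_mul_self hn

lemma t5_mem_R5 (hn : n ≠ 0) : t5 n ∈ R5 n := by
  rw [t5_eq hn]
  exact add_mem (one_mem _) (mul_mem (algebraMap_inv_mem_R5 n) (xi5_mem_R5 n))

lemma t5Inv_mem_R5 (n : ℤ) : t5Inv n ∈ R5 n :=
  add_mem (one_mem _) (mul_mem (algebraMap_inv_mem_R5 n) (sub_mem (one_mem _) (xi5_mem_R5 n)))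

noncomputable def t5Unit (hn : n ≠ 0) : (R5 n)ˣ :=
  ⟨⟨t5 n, t5_mem_R5 hn⟩, ⟨t5Inv n, t5Inv_mem_R5 n⟩, Subtype.ext (t5_mul_t5Inv hn),
    Subtype.ext ((mul_comm _ _).trans (t5_mul_t5Inv hn))⟩

noncomputable def laurentEval5 (hn : n ≠ 0) : ℤ[T;T⁻¹] →+* R5 n :=
  LaurentPolynomial.eval₂ (Int.castRingHom _) (t5Unit hn)

noncomputable def laurentEval5K (hn : n ≠ 0) : ℤ[T;T⁻¹] →+* K5 n :=
  (R5 n).subtype.comp (laurentEval5 hn)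

lemma laurentEval5K_T_one (hn : n ≠ 0) : laurentEval5K hn (T 1) = t5 n := by
  simp [laurentEval5K, laurentEval5, t5Unit]

lemma laurentEval5K_T_neg_one (hn : n ≠ 0) : laurentEval5K hn (T (-1)) = t5Inv n := by
  simp [laurentEval5K, laurentEval5, t5Unit]

lemma laurentEval5K_C (hn : n ≠ 0) (c : ℤ) : laurentEval5K hn (LaurentPolynomial.C c) = c := by
  simp [laurentEval5K, laurentEval5]

lemma laurentEval5_surjective (hn : n ≠ 0) : Function.Surjective (laurentEval5 hn) := by
  have hle : R5 n ≤ (laurentEval5K hn).range := by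
    refine Subring.closure_le.2 (Set.insert_subset ⟨T 1 + T (-1) - 2, ?_⟩
      (Set.singleton_subset_iff.2 ⟨LaurentPolynomial.C n * T 1 - LaurentPolynomial.C n, ?_⟩))
    · rw [map_sub, map_add, map_ofNat, laurentEval5K_T_one, laurentEval5K_T_neg_one, t5_eq hn,
        t5Inv]
      ring
    · rw [map_sub, map_mul, laurentEval5K_C, laurentEval5K_T_one, t5_eq hn]
      linear_combination xi5 n * algebraMap_inv_mul_self hn
  intro b
  obtain ⟨p, hp⟩ := hle b.2
  exact ⟨p, Subtype.ext hp⟩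

lemma laurentEval5K_DeltaL (hn : n ≠ 0) : laurentEval5K hn (DeltaL n) = 0 := by
  rw [DeltaL, show (T 2 : ℤ[T;T⁻¹]) = T 1 * T 1 by rw [← T_add]; rfl]
  simp only [map_add, map_sub, map_mul, laurentEval5K_C, laurentEval5K_T_one]
  push_cast
  linear_combination t5_quadratic_eq_zero hn

end QuadraticOrder

section DeltaZ

variable {n : ℤ}

noncomputable def DeltaZ (n : ℤ) : ℤ[X] :=
  Polynomial.C n * X ^ 2 - Polynomial.C (2 * n + 1) * X + Polynomial.C n

lemma toLaurent_DeltaZ : toLaurent (DeltaZ n) = DeltaL n := by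
  simp only [DeltaZ, DeltaL, map_add, map_sub, map_mul, toLaurent_C, toLaurent_X, toLaurent_X_pow]
  rfl

lemma map_DeltaZ : (DeltaZ n).map (Int.castRingHom ℚ) = DeltaQ n := by
  simp only [DeltaZ, DeltaQ, Polynomial.map_add, Polynomial.map_sub, Polynomial.map_mul,
    Polynomial.map_pow, map_C, map_X, Int.coe_castRingHom]

lemma isPrimitive_DeltaZ : (DeltaZ n).IsPrimitive := by
  intro r hr
  have hcoeff := (C_dvd_iff_dvd_coeff _ _).1 hr
  simp only [DeltaZ, coeff_add, coeff_sub, coeff_C_mul, coeff_X_pow, coeff_X, coeff_C] at hcoeff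
  have h0 : r ∣ n := by simpa using hcoeff 0
  have h1 : r ∣ 2 * n + 1 := by simpa [neg_add_rev] using (hcoeff 1).neg_right
  exact isUnit_of_dvd_one ((Int.dvd_add_right (h0.mul_left 2)).1 h1)

end DeltaZ

instance (n : ℤ) : Nontrivial (K5 n) :=
  AdjoinRoot.nontrivial _ (by rw [degree_X_pow_sub_C two_pos]; decide)

/-- For `n ≠ 0` with `Δₙ` irreducible over `ℚ`, the ring homomorphism
`f : ℤ[t,t⁻¹] → ℤ[1/n, ξ]` determined by `t ↦ a/n` is well-defined, surjective, and
has kernel exactly `(Δₙ)`. -/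
theorem stmt5 (n : ℤ) (hn : n ≠ 0) (hirr : Irreducible (DeltaQ n)) :
    ∃ f : LaurentPolynomial ℤ →+* (R5 n),
      ((f (LaurentPolynomial.T 1) : K5 n) = algebraMap ℚ (K5 n) ((n : ℚ)⁻¹) * a5 n) ∧
      Function.Surjective f ∧
      RingHom.ker f = Ideal.span {DeltaL n} := by
  refine ⟨laurentEval5 hn, laurentEval5K_T_one hn, laurentEval5_surjective hn, ?_⟩
  rw [← RingHom.ker_comp_of_injective _ (R5 n).subtype_injective, ← toLaurent_DeltaZ]
  refine ker_eq_span_toLaurent _ (ker_eq_span_of_isPrimitive _ isPrimitive_DeltaZ ?_ ?_)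
  · rwa [map_DeltaZ]
  · exact (congrArg _ toLaurent_DeltaZ).trans (laurentEval5K_DeltaL hn)
end

section
/- Let $n = -p^k$ for a prime $p$ and $k \geq 1$, write $4n+1 = c^2 d$ with $d$ square-free, and set $\xi = \frac{1+\sqrt{4n+1}}{2}$ and $\omega = \frac{1+\sqrt{d}}{2}$. In the ring of integers $\mathbb{Z}[\omega]$ define the ideals $\mathfrak{p}_1 = (p, \xi)$ and $\mathfrak{p}_2 = (p, \bar{\xi})$ where $\bar{\xi} = \frac{1-\sqrt{4n+1}}{2}$. Then $\mathfrak{p}_1$ and $\mathfrak{p}_2$ are distinct prime ideals, $\mathfrak{p}_1 \mathfrak{p}_2 = (p)$, $\mathfrak{p}_1^k = (\xi)$, and $\mathfrak{p}_2^k = (\bar{\xi})$. In particular $(n) = \mathfrak{p}_1^k \mathfrak{p}_2^k$. -/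
/-!
`ξ` and `ξ̄ = 1 - ξ` are the roots of `X² - X - n`, so `ξ + ξ̄ = 1` and `ξ ξ̄ = pᵏ`. Since `p ∤ c`,
`(p, cω - g)` is the kernel of the map `ℤ[ω] → 𝔽_p` sending `ω` to `g / c`, which is a root of
`X² - X - (d-1)/4` mod `p` exactly when `p` divides the norm of `cω - g`; this applies to
`ξ = cω - (c-1)/2` and to `-ξ̄`, so both ideals are prime. As `ξ + ξ̄ = 1`, the ideals are coprime
and their product is `(p)`. Finally `𝔭₁ᵏ ⊆ (ξ, pᵏ) = (ξ)`, `𝔭₂ᵏ ⊆ (ξ̄)` and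
`𝔭₁ᵏ 𝔭₂ᵏ = (pᵏ) = (ξ)(ξ̄)`; as `pᵏ` is a non-zero-divisor of the free `ℤ`-module `ℤ[ω]`,
both inclusions are equalities.
-/

/-- The ring of integers `ℤ[ω]`, `ω = (1+√d)/2`, realized as `ℤ[X]/(X² - X - (d-1)/4)`. -/
abbrev R9 (d : ℤ) :=
  AdjoinRoot ((Polynomial.X : Polynomial ℤ) ^ 2 - Polynomial.X - Polynomial.C ((d - 1) / 4))

/-- `ω = (1+√d)/2`. -/
noncomputable abbrev omega9 (d : ℤ) : R9 d := AdjoinRoot.root _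

/-- `ξ = (1 + √(4n+1))/2 = (1 + c√d)/2 = cω - (c-1)/2` in `ℤ[ω]`. -/
noncomputable abbrev xi9 (c d : ℤ) : R9 d :=
  (c : R9 d) * omega9 d - (((c - 1) / 2 : ℤ) : R9 d)

open Polynomial

namespace Ideal

variable {R : Type*} [CommRing R]

theorem sup_pow_le_sup_pow (I J : Ideal R) {k : ℕ} (hk : k ≠ 0) :
    (I ⊔ J) ^ k ≤ I ⊔ J ^ k := by
  obtain ⟨i, rfl⟩ := Nat.exists_eq_succ_of_ne_zero hk
  induction i with
  | zero => simp
  | succ i ih =>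
    calc (I ⊔ J) ^ (i + 2) = (I ⊔ J) ^ (i + 1) * (I ⊔ J) := pow_succ _ _
      _ ≤ (I ⊔ J ^ (i + 1)) * (I ⊔ J) := mul_mono_left (ih (Nat.succ_ne_zero i))
      _ ≤ I ⊔ J ^ (i + 2) := by
        rw [mul_sup, sup_mul, sup_mul, ← pow_succ]
        exact sup_le (sup_le (le_sup_of_le_left mul_le_right) (le_sup_of_le_left mul_le_right))
          (sup_le (le_sup_of_le_left mul_le_left) le_sup_right)

theorem span_pair_pow_le_span_singleton {q z : R} {k : ℕ} (hk : k ≠ 0) (hz : z ∣ q ^ k) :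
    span {q, z} ^ k ≤ span {z} := by
  rw [span_insert, sup_comm]
  refine (sup_pow_le_sup_pow _ _ hk).trans (sup_le le_rfl ?_)
  rwa [span_singleton_pow, span_singleton_le_span_singleton]

theorem span_pair_mul_span_pair_of_add_eq_one {q a b : R} (hab : a + b = 1) (hq : q ∣ a * b) :
    span {q, a} * span {q, b} = span {q} := by
  refine le_antisymm ?_ ?_
  · rw [span_insert, span_insert, sup_mul, mul_sup, mul_sup, span_singleton_mul_span_singleton,
      span_singleton_mul_span_singleton, span_singleton_mul_span_singleton,
      span_singleton_mul_span_singleton]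
    simp only [sup_le_iff, span_singleton_le_span_singleton]
    exact ⟨⟨dvd_mul_right q q, dvd_mul_right q b⟩, dvd_mul_left q a, hq⟩
  · have hmem : q * b + a * q ∈ span {q, a} * span {q, b} :=
      add_mem (mul_mem_mul (subset_span (by simp)) (subset_span (by simp)))
        (mul_mem_mul (subset_span (by simp)) (subset_span (by simp)))
    rwa [show q * b + a * q = q by linear_combination q * hab, ← span_singleton_le_iff_mem]
      at hmem

theorem span_singleton_mul_right_mono_of_isLeftRegular {x : R} (hx : IsLeftRegular x)
    {I J : Ideal R} : span {x} * I ≤ span {x} * J ↔ I ≤ J := by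
  simp_rw [span_singleton_mul_le_span_singleton_mul, hx.eq_iff, exists_eq_right', SetLike.le_def]

theorem eq_span_singleton_of_mul_eq {I J : Ideal R} {a b : R} (hI : I ≤ span {a})
    (hJ : J ≤ span {b}) (hIJ : I * J = span {a * b}) (hab : IsLeftRegular (a * b)) :
    J = span {b} := by
  have ha : IsLeftRegular a := by
    rw [mul_comm] at hab
    exact hab.of_mul
  refine le_antisymm hJ ((span_singleton_mul_right_mono_of_isLeftRegular ha).mp ?_)
  calc span {a} * span {b} = I * J := by rw [hIJ, span_singleton_mul_span_singleton]
    _ ≤ span {a} * J := mul_mono_left hI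

theorem span_pair_ne_span_pair_of_add_eq_one {q a b : R} (hab : a + b = 1)
    (ha : span {q, a} ≠ ⊤) : span {q, a} ≠ span {q, b} := by
  intro h
  refine ha ((eq_top_iff_one _).mpr ?_)
  rw [← hab]
  exact add_mem (subset_span (Set.mem_insert_of_mem _ rfl))
    (h ▸ subset_span (Set.mem_insert_of_mem _ rfl))

theorem span_pair_pow_eq_span_singleton {q a b : R} {k : ℕ} (hk : k ≠ 0) (hab : a + b = 1)
    (habq : a * b = q ^ k) (hq : IsLeftRegular (q ^ k)) : span {q, a} ^ k = span {a} := by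
  have hprod : span {q, b} ^ k * span {q, a} ^ k = span {b * a} := by
    rw [← mul_pow, mul_comm,
      span_pair_mul_span_pair_of_add_eq_one hab (habq ▸ dvd_pow_self q hk), span_singleton_pow,
      mul_comm, habq]
  exact eq_span_singleton_of_mul_eq
    (span_pair_pow_le_span_singleton hk (habq ▸ dvd_mul_left b a))
    (span_pair_pow_le_span_singleton hk (habq ▸ dvd_mul_right a b)) hprod
    (by rwa [mul_comm, habq])

end Ideal

namespace AdjoinRoot

variable {f : ℤ[X]}

theorem exists_intCast_sub_mem_span_pair {q c : ℤ} (hqc : IsCoprime q c) (g : ℤ)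
    (x : AdjoinRoot f) :
    ∃ t : ℤ, x - t ∈ Ideal.span {(q : AdjoinRoot f), c * root f - g} := by
  obtain ⟨u, v, huv⟩ := hqc
  have huv' : (u : AdjoinRoot f) * q + v * c = 1 := by exact_mod_cast congrArg Int.cast huv
  have hroot : root f - ((v * g : ℤ) : AdjoinRoot f) ∈
      Ideal.span {(q : AdjoinRoot f), c * root f - g} := by
    refine Ideal.mem_span_pair.mpr ⟨u * root f, v, ?_⟩
    push_cast
    linear_combination (root f) * huv'
  -- modulo the ideal `root f ≡ v * g`, hence `P (root f) ≡ P (v * g)`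
  induction x using AdjoinRoot.induction_on with
  | ih P =>
    refine ⟨P.eval (v * g), ?_⟩
    have hdvd :=
      sub_dvd_eval_sub (root f) ((v * g : ℤ) : AdjoinRoot f) (P.map (algebraMap ℤ _))
    rw [eval_intCast_map, eval_map, ← aeval_def, aeval_eq, Int.cast_id, eq_intCast] at hdvd
    exact Ideal.mem_of_dvd _ hdvd hroot

theorem ker_lift_eq_span_natCast_mul_root_sub {p : ℕ} [hp : Fact p.Prime] {a : ZMod p}
    (ha : f.eval₂ (Int.castRingHom (ZMod p)) a = 0) {c g : ℤ} (hc : (c : ZMod p) ≠ 0)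
    (hca : c * a = g) :
    RingHom.ker (lift (Int.castRingHom (ZMod p)) a ha) =
      Ideal.span {(p : AdjoinRoot f), c * root f - g} := by
  set φ := lift (Int.castRingHom (ZMod p)) a ha
  have hle : Ideal.span {(p : AdjoinRoot f), c * root f - g} ≤ RingHom.ker φ := by
    rw [Ideal.span_le, Set.insert_subset_iff, Set.singleton_subset_iff]
    simp [φ, lift_root, hca]
  refine le_antisymm (fun x hx => ?_) hle
  have hpc : IsCoprime (p : ℤ) c := (Nat.prime_iff_prime_int.mp hp.out).coprime_iff_not_dvd.mpr
    (mt (ZMod.intCast_zmod_eq_zero_iff_dvd c p).mpr hc)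
  obtain ⟨t, ht⟩ := exists_intCast_sub_mem_span_pair hpc g x
  have hpt : (p : ℤ) ∣ t := by
    have := hle ht
    rw [RingHom.mem_ker, map_sub, hx, map_intCast, zero_sub, neg_eq_zero] at this
    exact (ZMod.intCast_zmod_eq_zero_iff_dvd t p).mp this
  obtain ⟨w, rfl⟩ := hpt
  have hpw : (((p * w : ℤ)) : AdjoinRoot f) ∈ Ideal.span {(p : AdjoinRoot f), c * root f - g} :=
    Ideal.mem_span_pair.mpr ⟨w, 0, by push_cast; ring⟩
  simpa using add_mem ht hpw

theorem isPrime_span_natCast_mul_root_sub {p : ℕ} [Fact p.Prime] {a : ZMod p}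
    (ha : f.eval₂ (Int.castRingHom (ZMod p)) a = 0) {c g : ℤ} (hc : (c : ZMod p) ≠ 0)
    (hca : c * a = g) : (Ideal.span {(p : AdjoinRoot f), c * root f - g}).IsPrime :=
  ker_lift_eq_span_natCast_mul_root_sub ha hc hca ▸ RingHom.ker_isPrime _

theorem isLeftRegular_intCast (hf : f.Monic) {t : ℤ} (ht : t ≠ 0) :
    IsLeftRegular (t : AdjoinRoot f) := by
  have := hf.free_adjoinRoot
  intro x y hxy
  exact (IsRegular.of_ne_zero ht).isSMulRegular (M := AdjoinRoot f)
    (by simpa [zsmul_eq_mul] using hxy)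

end AdjoinRoot

theorem exists_eq_two_mul_add_one_of_four_mul_add_one_eq {n c d : ℤ}
    (h : 4 * n + 1 = c ^ 2 * d) :
    ∃ e m, c = 2 * e + 1 ∧ d = 4 * m + 1 ∧ n = e ^ 2 + e + m * c ^ 2 := by
  obtain ⟨e, rfl⟩ : Odd c := by
    refine Int.not_even_iff_odd.mp fun ⟨t, ht⟩ => ?_
    have : 4 * n + 1 = 4 * (t ^ 2 * d) := by rw [h, ht]; ring
    omega
  refine ⟨e, n - (e ^ 2 + e) * d, rfl, by linear_combination -h,
    by linear_combination -(e ^ 2 + e) * h⟩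

theorem monic_X_sq_sub_X_sub_C (m : ℤ) : (X ^ 2 - X - C m : ℤ[X]).Monic := by
  monicity!

theorem omega9_sq (d : ℤ) : omega9 d ^ 2 = omega9 d + ((d - 1) / 4 : ℤ) := by
  have h := AdjoinRoot.eval₂_root ((X : ℤ[X]) ^ 2 - X - C ((d - 1) / 4))
  simp only [eval₂_sub, eval₂_X_pow, eval₂_X, eval₂_C] at h
  rw [eq_intCast (AdjoinRoot.of _)] at h
  linear_combination h

theorem xi9_mul_one_sub_xi9 {n c d : ℤ} (h : 4 * n + 1 = c ^ 2 * d) :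
    xi9 c d * (1 - xi9 c d) = -n := by
  obtain ⟨e, m, rfl, hd, rfl⟩ := exists_eq_two_mul_add_one_of_four_mul_add_one_eq h
  have hm : (((d - 1) / 4 : ℤ) : R9 d) = m := congrArg Int.cast (by omega)
  simp only [xi9]
  rw [show (2 * e + 1 - 1) / 2 = e by omega]
  push_cast
  linear_combination (-(2 * (e : R9 d) + 1) ^ 2) * (omega9_sq d) - (2 * (e : R9 d) + 1) ^ 2 * hm

theorem isPrime_span_natCast_mul_omega9_sub {p : ℕ} [Fact p.Prime] {d c g : ℤ}
    (hc : (c : ZMod p) ≠ 0) (hg : ((g ^ 2 - g * c - (d - 1) / 4 * c ^ 2 : ℤ) : ZMod p) = 0) :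
    (Ideal.span {(p : R9 d), c * omega9 d - g}).IsPrime := by
  refine AdjoinRoot.isPrime_span_natCast_mul_root_sub (a := (g : ZMod p) / (c : ZMod p)) ?_ hc
    (by field_simp)
  simp only [eval₂_sub, eval₂_X_pow, eval₂_X, eval₂_C, Int.coe_castRingHom]
  push_cast at hg
  field_simp
  linear_combination hg

theorem isPrime_span_natCast_xi9 {p : ℕ} [Fact p.Prime] {n c d : ℤ} (h : 4 * n + 1 = c ^ 2 * d)
    (hpn : (p : ℤ) ∣ n) :
    (Ideal.span {(p : R9 d), xi9 c d}).IsPrime ∧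
      (Ideal.span {(p : R9 d), 1 - xi9 c d}).IsPrime := by
  obtain ⟨e, m, rfl, hd, rfl⟩ := exists_eq_two_mul_add_one_of_four_mul_add_one_eq h
  have hn0 : ((e ^ 2 + e + m * (2 * e + 1) ^ 2 : ℤ) : ZMod p) = 0 :=
    (ZMod.intCast_zmod_eq_zero_iff_dvd _ p).mpr hpn
  have hc : ((2 * e + 1 : ℤ) : ZMod p) ≠ 0 := by
    intro hc
    have := congrArg (Int.cast : ℤ → ZMod p) h
    push_cast at this hn0 hc
    rw [hn0, hc] at this
    simp at this
  have hm : (d - 1) / 4 = m := by omega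
  constructor
  · convert isPrime_span_natCast_mul_omega9_sub (g := e) hc ?_ using 4
    · simp only [xi9, show (2 * e + 1 - 1) / 2 = e by omega]
    · rw [hm, ← neg_eq_zero, ← hn0]
      push_cast
      ring
  · have hξ : 1 - xi9 (2 * e + 1) d = -((2 * e + 1 : ℤ) * omega9 d - (e + 1 : ℤ)) := by
      simp only [xi9, show (2 * e + 1 - 1) / 2 = e by omega]
      push_cast
      ring
    rw [hξ, Ideal.span_insert, Ideal.span_singleton_neg, ← Ideal.span_insert]
    refine isPrime_span_natCast_mul_omega9_sub hc ?_
    rw [hm, ← neg_eq_zero, ← hn0]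
    push_cast
    ring

theorem stmt9_general (p : ℕ) (hp : p.Prime) (k : ℕ) (hk : 1 ≤ k) (n c d : ℤ)
    (hn : n = -(p : ℤ) ^ k) (hcd : 4 * n + 1 = c ^ 2 * d) :
    (Ideal.span {(p : R9 d), xi9 c d}).IsPrime ∧
    (Ideal.span {(p : R9 d), 1 - xi9 c d}).IsPrime ∧
    Ideal.span {(p : R9 d), xi9 c d} ≠ Ideal.span {(p : R9 d), 1 - xi9 c d} ∧
    Ideal.span {(p : R9 d), xi9 c d} * Ideal.span {(p : R9 d), 1 - xi9 c d} =
      Ideal.span {(p : R9 d)} ∧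
    Ideal.span {(p : R9 d), xi9 c d} ^ k = Ideal.span {xi9 c d} ∧
    Ideal.span {(p : R9 d), 1 - xi9 c d} ^ k = Ideal.span {1 - xi9 c d} ∧
    Ideal.span {(n : R9 d)} =
      Ideal.span {(p : R9 d), xi9 c d} ^ k * Ideal.span {(p : R9 d), 1 - xi9 c d} ^ k := by
  have := Fact.mk hp
  have hk0 : k ≠ 0 := by omega
  set ξ := xi9 c d
  have hξ : ξ * (1 - ξ) = (p : R9 d) ^ k := by
    rw [xi9_mul_one_sub_xi9 hcd, hn]
    push_cast
    ring
  obtain ⟨hprime₁, hprime₂⟩ :=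
    isPrime_span_natCast_xi9 hcd (hn ▸ (dvd_pow_self _ hk0).neg_right)
  have hreg : IsLeftRegular ((p : R9 d) ^ k) := by
    exact_mod_cast AdjoinRoot.isLeftRegular_intCast (monic_X_sq_sub_X_sub_C _)
      (pow_ne_zero k (Int.natCast_ne_zero.mpr hp.ne_zero))
  have hP₁ := Ideal.span_pair_pow_eq_span_singleton hk0 (add_sub_cancel ξ 1) hξ hreg
  have hP₂ := Ideal.span_pair_pow_eq_span_singleton hk0 (sub_add_cancel 1 ξ)
    (by rw [mul_comm, hξ]) hreg
  refine ⟨hprime₁, hprime₂,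
    Ideal.span_pair_ne_span_pair_of_add_eq_one (add_sub_cancel ξ 1) hprime₁.ne_top,
    Ideal.span_pair_mul_span_pair_of_add_eq_one (add_sub_cancel ξ 1) (hξ ▸ dvd_pow_self _ hk0),
    hP₁, hP₂, ?_⟩
  rw [hP₁, hP₂, Ideal.span_singleton_mul_span_singleton, hξ, hn]
  push_cast
  exact Ideal.span_singleton_neg _

/-- for `n = -pᵏ`, `4n+1 = c²d` with `d` square-free, the ideals
`𝔭₁ = (p, ξ)` and `𝔭₂ = (p, ξ̄)` of `ℤ[ω]` (where `ξ̄ = 1 - ξ`) are distinct primes with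
`𝔭₁𝔭₂ = (p)`, `𝔭₁ᵏ = (ξ)`, `𝔭₂ᵏ = (ξ̄)`, so `(n) = 𝔭₁ᵏ 𝔭₂ᵏ`. -/
theorem stmt9 (p : ℕ) (hp : p.Prime) (k : ℕ) (hk : 1 ≤ k) (n c d : ℤ)
    (hn : n = -(p : ℤ) ^ k) (hcd : 4 * n + 1 = c ^ 2 * d) (hd : Squarefree d) (hc : 0 < c) :
    (Ideal.span {(p : R9 d), xi9 c d}).IsPrime ∧
    (Ideal.span {(p : R9 d), 1 - xi9 c d}).IsPrime ∧
    Ideal.span {(p : R9 d), xi9 c d} ≠ Ideal.span {(p : R9 d), 1 - xi9 c d} ∧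
    Ideal.span {(p : R9 d), xi9 c d} * Ideal.span {(p : R9 d), 1 - xi9 c d} =
      Ideal.span {(p : R9 d)} ∧
    Ideal.span {(p : R9 d), xi9 c d} ^ k = Ideal.span {xi9 c d} ∧
    Ideal.span {(p : R9 d), 1 - xi9 c d} ^ k = Ideal.span {1 - xi9 c d} ∧
    Ideal.span {(n : R9 d)} =
      Ideal.span {(p : R9 d), xi9 c d} ^ k * Ideal.span {(p : R9 d), 1 - xi9 c d} ^ k :=
  stmt9_general p hp k hk n c d hn hcd
end

section
/- Let $n = -p^k$ for a prime $p$ and $k \geq 1$, write $4n + 1 = c^2 d$ with $d$ square-free and $c > 0$, and let $\omega = (1+\sqrt{d})/2$ and $\xi = (1+c\sqrt{d})/2$. Suppose $z = a + b\omega \in \mathbb{Z}[\omega]$ satisfies $N(z) = z\bar{z} = p^i$ for some $0 \leq i < k$, and $p^\ell z \in \mathbb{Z}[\xi]$ for some $\ell \geq 0$. Then $i$ is even and $z = \pm p^{i/2}$. -/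
open Polynomial

namespace R9

variable {d : ℤ}

lemma omega_sq : omega9 d ^ 2 = omega9 d + (((d - 1) / 4 : ℤ) : R9 d) := by
  have h := AdjoinRoot.eval₂_root (X ^ 2 - X - C ((d - 1) / 4) : ℤ[X])
  simp only [eval₂_sub, eval₂_pow, eval₂_X, eval₂_C] at h
  rw [eq_intCast (AdjoinRoot.of _)] at h
  linear_combination h

lemma eq_zero_of_intCast_add_mul_omega_eq_zero {u v : ℤ} (h : (u : R9 d) + v * omega9 d = 0) :
    u = 0 ∧ v = 0 := by
  set g : ℤ[X] := X ^ 2 - X - C ((d - 1) / 4)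
  have hg : g.Monic := by unfold g; monicity!
  have hdeg : (C u + C v * X : ℤ[X]).degree < g.degree := by
    rw [show g.degree = 2 by unfold g; compute_degree!]
    compute_degree!
  have hpoly : C u + C v * X = 0 := by
    rw [← (modByMonic_eq_self_iff hg).2 hdeg, ← AdjoinRoot.modByMonicHom_mk hg]
    simpa using congrArg (AdjoinRoot.modByMonicHom hg) h
  have h0 := congrArg (coeff · 0) hpoly
  have h1 := congrArg (coeff · 1) hpoly
  simp only [coeff_add, coeff_C, coeff_C_mul, coeff_X, coeff_zero] at h0 h1
  exact ⟨by simpa using h0, by simpa using h1⟩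

lemma exists_eq_add_mul_omega_of_mem_closure_xi {c : ℤ} {z : R9 d}
    (hz : z ∈ Subring.closure {xi9 c d}) :
    ∃ x y : ℤ, z = x + ((c * y : ℤ) : R9 d) * omega9 d := by
  induction hz using Subring.closure_induction with
  | mem w hw =>
    rw [Set.mem_singleton_iff.1 hw]
    exact ⟨-((c - 1) / 2), 1, by push_cast; ring⟩
  | zero => exact ⟨0, 0, by simp⟩
  | one => exact ⟨1, 0, by simp⟩
  | add _ _ _ _ h₁ h₂ =>
    obtain ⟨x₁, y₁, rfl⟩ := h₁
    obtain ⟨x₂, y₂, rfl⟩ := h₂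
    exact ⟨x₁ + x₂, y₁ + y₂, by push_cast; ring⟩
  | neg _ _ h =>
    obtain ⟨x, y, rfl⟩ := h
    exact ⟨-x, -y, by push_cast; ring⟩
  | mul _ _ _ _ h₁ h₂ =>
    obtain ⟨x₁, y₁, rfl⟩ := h₁
    obtain ⟨x₂, y₂, rfl⟩ := h₂
    refine ⟨x₁ * x₂ + c ^ 2 * y₁ * y₂ * ((d - 1) / 4),
      x₁ * y₂ + x₂ * y₁ + c * y₁ * y₂, ?_⟩
    push_cast
    linear_combination ((c : R9 d) ^ 2 * (y₁ : R9 d) * (y₂ : R9 d)) * omega_sq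

lemma dvd_of_mul_mem_closure_xi {c m a b : ℤ} (hcm : IsCoprime c m)
    (h : (m : R9 d) * ((a : R9 d) + (b : R9 d) * omega9 d) ∈ Subring.closure {xi9 c d}) :
    c ∣ b := by
  obtain ⟨x, y, hxy⟩ := exists_eq_add_mul_omega_of_mem_closure_xi h
  have hcoeff : ((m * a - x : ℤ) : R9 d) + ((m * b - c * y : ℤ) : R9 d) * omega9 d = 0 := by
    push_cast at hxy ⊢
    linear_combination hxy
  have hb : m * b = c * y := sub_eq_zero.1 (eq_zero_of_intCast_add_mul_omega_eq_zero hcoeff).2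
  exact hcm.dvd_of_dvd_mul_left ⟨y, hb⟩

end R9

theorem isCoprime_of_four_mul_add_one_eq_sq_mul {R : Type*} [CommRing R] {n c d m : R}
    (h : 4 * n + 1 = c ^ 2 * d) (hm : m ∣ n) : IsCoprime c m := by
  obtain ⟨q, rfl⟩ := hm
  exact ⟨c * d, -4 * q, by linear_combination -h⟩

theorem Int.exists_eq_four_mul_add_one_of_four_mul_add_one_eq_sq_mul {n c d : ℤ}
    (h : 4 * n + 1 = c ^ 2 * d) : ∃ e, d = 4 * e + 1 := by
  obtain ⟨t, rfl⟩ | ⟨t, rfl⟩ := Int.even_or_odd c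
  · have : 4 * n + 1 = 4 * (t ^ 2 * d) := by linear_combination h
    omega
  · exact ⟨n - (t ^ 2 + t) * d, by linear_combination -h⟩

theorem Int.eq_zero_of_sq_add_sq_mul_eq {q s t : ℤ} {i k : ℕ} (hq : 2 ≤ q) (hik : i < k)
    (h : s ^ 2 + t ^ 2 * (4 * q ^ k - 1) = 4 * q ^ i) : t = 0 := by
  by_contra ht
  have ht2 : 0 < t ^ 2 := by positivity
  have hqi : 1 ≤ q ^ i := one_le_pow₀ (by omega)
  have hqk : 2 * q ^ i ≤ q ^ k := calc
    2 * q ^ i ≤ q ^ (k - i) * q ^ i := by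
      gcongr; exact hq.trans (le_self_pow₀ (by omega) (by omega))
    _ = q ^ k := by rw [← pow_add, Nat.sub_add_cancel hik.le]
  nlinarith [sq_nonneg s]

theorem Int.even_and_eq_or_eq_neg_of_sq_eq_prime_pow {p : ℕ} (hp : p.Prime) {a : ℤ} {i : ℕ}
    (h : a ^ 2 = (p : ℤ) ^ i) :
    Even i ∧ (a = (p : ℤ) ^ (i / 2) ∨ a = -(p : ℤ) ^ (i / 2)) := by
  have hnat : p ^ i = a.natAbs ^ 2 := by
    rw [← Int.natAbs_pow, h, Int.natAbs_pow, Int.natAbs_natCast]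
  obtain ⟨j, hj⟩ := Nat.exists_base_eq_prime_pow_of_prime_pow_eq_base_pow hp two_ne_zero hnat
  have hi : i = 2 * j := by
    rw [hj, ← pow_mul, mul_comm] at hnat
    exact Nat.pow_right_injective hp.two_le hnat
  subst hi
  refine ⟨even_two_mul j, ?_⟩
  rw [Nat.mul_div_cancel_left j two_pos]
  rcases Int.natAbs_eq a with ha | ha <;> rw [ha, hj] <;> simp

theorem stmt10_general (p : ℕ) (hp : p.Prime) (k : ℕ) (n c d : ℤ)
    (hn : n = -(p : ℤ) ^ k) (hcd : 4 * n + 1 = c ^ 2 * d)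
    (a b : ℤ) (i : ℕ) (hi : i < k) (l : ℕ)
    (hnorm : a ^ 2 + a * b + b ^ 2 * ((1 - d) / 4) = (p : ℤ) ^ i)
    (hmem : ((p : R9 d)) ^ l * ((a : R9 d) + (b : R9 d) * omega9 d) ∈
      Subring.closure {xi9 c d}) :
    Even i ∧ (((a : R9 d) + (b : R9 d) * omega9 d) = (p : R9 d) ^ (i / 2) ∨
      ((a : R9 d) + (b : R9 d) * omega9 d) = -(p : R9 d) ^ (i / 2)) := by
  obtain ⟨e, rfl⟩ := Int.exists_eq_four_mul_add_one_of_four_mul_add_one_eq_sq_mul hcd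
  rw [show (1 - (4 * e + 1)) / 4 = -e by omega] at hnorm
  have hpn : (p : ℤ) ∣ n := hn ▸ (dvd_pow_self _ (by omega)).neg_right
  have hcp : IsCoprime c ((p : ℤ) ^ l) :=
    (isCoprime_of_four_mul_add_one_eq_sq_mul hcd hpn).pow_right
  obtain ⟨b, rfl⟩ := R9.dvd_of_mul_mem_closure_xi hcp (by exact_mod_cast hmem)
  -- `4 N(a + cbω) = (2a + cb)² - c²d b²`, and `c²d = 1 - 4pᵏ`
  have hnorm' : (2 * a + c * b) ^ 2 + b ^ 2 * (4 * (p : ℤ) ^ k - 1) = 4 * (p : ℤ) ^ i := by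
    linear_combination 4 * hnorm - b ^ 2 * hcd + 4 * b ^ 2 * hn
  obtain rfl := Int.eq_zero_of_sq_add_sq_mul_eq (by exact_mod_cast hp.two_le) hi hnorm'
  obtain ⟨heven, ha⟩ := Int.even_and_eq_or_eq_neg_of_sq_eq_prime_pow hp (by simpa using hnorm)
  refine ⟨heven, ?_⟩
  rcases ha with rfl | rfl <;> simp

/-- with `n = -pᵏ`, `4n+1 = c²d` (`d` square-free, `c > 0`), if
`z = a + bω ∈ ℤ[ω]` has norm `N(z) = a² + ab + b²(1-d)/4 = pⁱ` with `0 ≤ i < k`, and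
`pˡ z ∈ ℤ[ξ]` for some `ℓ ≥ 0`, then `i` is even and `z = ± p^{i/2}`. -/
theorem stmt10 (p : ℕ) (hp : p.Prime) (k : ℕ) (hk : 1 ≤ k) (n c d : ℤ)
    (hn : n = -(p : ℤ) ^ k) (hcd : 4 * n + 1 = c ^ 2 * d) (hd : Squarefree d) (hc : 0 < c)
    (a b : ℤ) (i : ℕ) (hi : i < k) (l : ℕ)
    (hnorm : a ^ 2 + a * b + b ^ 2 * ((1 - d) / 4) = (p : ℤ) ^ i)
    (hmem : ((p : R9 d)) ^ l * ((a : R9 d) + (b : R9 d) * omega9 d) ∈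
      Subring.closure {xi9 c d}) :
    Even i ∧ (((a : R9 d) + (b : R9 d) * omega9 d) = (p : R9 d) ^ (i / 2) ∨
      ((a : R9 d) + (b : R9 d) * omega9 d) = -(p : R9 d) ^ (i / 2)) :=
  stmt10_general p hp k n c d hn hcd a b i hi l hnorm hmem
end

section
/- Let $n \in \mathbb{Z}$, $\Delta_n(t) = nt^2-(2n+1)t+n$, and $\Lambda_n = \mathbb{Z}[t,t^{-1}]/(\Delta_n)$ with involution induced by $t \mapsto t^{-1}$. Let $U(\Lambda_n)$ be the group of unitary units. Then the classes of $+1$ and $-1$ in the quotient $U(\Lambda_n)/\{t^k\}_{k\in\mathbb{Z}}$ are distinct except precisely in the cases $n = 0$ and $n = -1$. Equivalently: there exist integers $a, b$ with $t^a \equiv -t^b \bmod \Delta_n$ in $\mathbb{Z}[t,t^{-1}]$ if and only if $n \in \{0, -1\}$. -/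
/-!
For `n ∉ {0, -1}`, evaluate at a complex root `z` of `Δₙ`: from `tᵃ + tᵇ ∈ (Δₙ)` we get
`z^(a-b) = -1`, so `z` is a root of unity. Then `z + z⁻¹` is an algebraic integer of absolute
value at most `2`, while dividing `Δₙ(z) = 0` by `n z` gives `z + z⁻¹ = 2 + 1/n`. Integrality
forces `n = ±1`, and `n = 1` violates the bound. Conversely `Δ₀ = -t` is a unit and
`Δ₋₁ = -(t² - t + 1)` divides `t³ + 1`.
-/

open LaurentPolynomial

lemma eval₂_DeltaL {S : Type*} [CommRing S] (n : ℤ) (x : Sˣ) :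
    eval₂ (Int.castRingHom S) x (DeltaL n) = n * (x : S) ^ 2 - (2 * n + 1) * x + n := by
  simp [DeltaL, map_ofNat]

lemma val_zpow_add_val_zpow_eq_zero_of_mem_span {R S : Type*} [CommRing R] [CommRing S]
    {φ : R →+* S} {x : Sˣ} {f : R[T;T⁻¹]} (hf : eval₂ φ x f = 0) {a b : ℤ}
    (h : T a + T b ∈ Ideal.span {f}) : ((x ^ a : Sˣ) : S) + (x ^ b : Sˣ) = 0 := by
  obtain ⟨g, hg⟩ := Ideal.mem_span_singleton'.1 h
  simpa [hf] using congrArg (eval₂ φ x) hg.symm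

lemma isOfFinOrder_of_val_zpow_add_val_zpow_eq_zero {R : Type*} [CommRing R] [IsDomain R]
    [NeZero (2 : R)] {x : Rˣ} {a b : ℤ} (h : ((x ^ a : Rˣ) : R) + (x ^ b : Rˣ) = 0) :
    IsOfFinOrder x := by
  have hab : a ≠ b := by
    rintro rfl
    rw [← two_mul] at h
    exact (x ^ a).ne_zero ((mul_eq_zero.1 h).resolve_left two_ne_zero)
  have hneg : x ^ (a - b) = -1 := by
    ext
    rw [zpow_sub, Units.val_mul, Units.val_neg, Units.val_one, eq_neg_of_add_eq_zero_left h,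
      neg_mul, Units.mul_inv]
  refine isOfFinOrder_iff_zpow_eq_one.2 ⟨2 * (a - b), by omega, ?_⟩
  rw [mul_comm, zpow_mul, hneg]
  norm_num

lemma IsOfFinOrder.isIntegral_val {R A : Type*} [CommRing R] [Ring A] [Algebra R A] {x : Aˣ}
    (hx : IsOfFinOrder x) : IsIntegral R (x : A) := by
  obtain ⟨k, hk, hxk⟩ := isOfFinOrder_iff_pow_eq_one.1 hx
  refine IsIntegral.of_pow hk ?_
  rw [← Units.val_pow_eq_pow_val, hxk, Units.val_one]
  exact isIntegral_one

lemma IsOfFinOrder.norm_val_add_val_inv_le_two {x : ℂˣ} (hx : IsOfFinOrder x) :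
    ‖(x : ℂ) + (x⁻¹ : ℂˣ)‖ ≤ 2 := by
  obtain ⟨k, hk, hxk⟩ := isOfFinOrder_iff_pow_eq_one.1 hx
  have hnorm : ‖(x : ℂ)‖ = 1 := by
    refine Complex.norm_eq_one_of_pow_eq_one ?_ hk.ne'
    rw [← Units.val_pow_eq_pow_val, hxk, Units.val_one]
  calc ‖(x : ℂ) + (x⁻¹ : ℂˣ)‖ ≤ ‖(x : ℂ)‖ + ‖((x⁻¹ : ℂˣ) : ℂ)‖ := norm_add_le _ _
    _ = 2 := by rw [Units.val_inv_eq_inv_val, norm_inv, hnorm]; norm_num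

lemma Int.eq_one_or_neg_one_of_isIntegral_inv {n : ℤ} (hn : n ≠ 0)
    (h : IsIntegral ℤ ((n : ℚ)⁻¹)) : n = 1 ∨ n = -1 := by
  obtain ⟨m, hm⟩ := IsIntegrallyClosed.isIntegral_iff.1 h
  refine Int.eq_one_or_neg_one_of_mul_eq_one (v := m) ?_
  have : (n : ℚ) * m = 1 := by
    rw [show (m : ℚ) = algebraMap ℤ ℚ m from rfl, hm, mul_inv_cancel₀ (by exact_mod_cast hn)]
  exact_mod_cast this

lemma exists_eval₂_DeltaL_eq_zero {K : Type*} [Field K] [IsAlgClosed K] {n : ℤ}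
    (hn : (n : K) ≠ 0) : ∃ x : Kˣ, eval₂ (Int.castRingHom K) x (DeltaL n) = 0 := by
  open Polynomial in
  obtain ⟨z, hz⟩ := IsAlgClosed.exists_root
    (Polynomial.C (n : K) * X ^ 2 + Polynomial.C (-(2 * n + 1) : K) * X + Polynomial.C (n : K))
    (by rw [degree_quadratic hn]; norm_num)
  simp only [IsRoot, eval_add, eval_mul, eval_pow, eval_C, eval_X] at hz
  have hz0 : z ≠ 0 := by rintro rfl; exact hn (by simpa using hz)
  refine ⟨Units.mk0 z hz0, ?_⟩
  rw [eval₂_DeltaL, Units.val_mk0]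
  linear_combination hz

lemma val_add_val_inv_of_eval₂_DeltaL_eq_zero {K : Type*} [Field K] {n : ℤ} (hn : (n : K) ≠ 0)
    {x : Kˣ} (hx : eval₂ (Int.castRingHom K) x (DeltaL n) = 0) :
    (x : K) + (x⁻¹ : Kˣ) = 2 + (n : K)⁻¹ := by
  rw [eval₂_DeltaL] at hx
  rw [Units.val_inv_eq_inv_val]
  field_simp
  linear_combination hx

lemma eq_zero_or_eq_neg_one_of_T_add_T_mem_span_DeltaL {n a b : ℤ}
    (h : T a + T b ∈ Ideal.span {DeltaL n}) : n = 0 ∨ n = -1 := by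
  rcases eq_or_ne n 0 with rfl | hn
  · exact .inl rfl
  obtain ⟨x, hx⟩ := exists_eval₂_DeltaL_eq_zero (K := ℂ) (Int.cast_ne_zero.2 hn)
  have hfin : IsOfFinOrder x :=
    isOfFinOrder_of_val_zpow_add_val_zpow_eq_zero (val_zpow_add_val_zpow_eq_zero_of_mem_span hx h)
  have hsum := val_add_val_inv_of_eval₂_DeltaL_eq_zero (Int.cast_ne_zero.2 hn) hx
  have hint : IsIntegral ℤ ((n : ℚ)⁻¹) := by
    rw [← isIntegral_algebraMap_iff (algebraMap ℚ ℂ).injective, map_inv₀, map_intCast,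
      eq_sub_of_add_eq' hsum.symm]
    exact (hfin.isIntegral_val.add hfin.inv.isIntegral_val).sub (isIntegral_natCast 2)
  rcases Int.eq_one_or_neg_one_of_isIntegral_inv hn hint with rfl | rfl
  · have := hfin.norm_val_add_val_inv_le_two
    rw [hsum] at this
    norm_num at this
  · exact .inr rfl

lemma span_DeltaL_zero : Ideal.span {DeltaL 0} = ⊤ := by
  rw [Ideal.span_singleton_eq_top, show DeltaL 0 = -T 1 by simp [DeltaL]]
  exact (isUnit_T 1).neg

lemma T_three_add_T_zero_mem_span_DeltaL_neg_one : T 3 + T 0 ∈ Ideal.span {DeltaL (-1)} := by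
  refine Ideal.mem_span_singleton'.2 ⟨-T 1 - 1, ?_⟩
  have hT2 : (T 2 : ℤ[T;T⁻¹]) = T 1 ^ 2 := by simp [T_pow]
  have hT3 : (T 3 : ℤ[T;T⁻¹]) = T 1 ^ 3 := by simp [T_pow]
  rw [DeltaL, hT2, hT3, T_zero, show (2 * -1 + 1 : ℤ) = -1 by norm_num, map_neg, map_one]
  ring

/-- the classes of `+1` and `-1` agree in `U(Λₙ)/{tᵏ}` — equivalently,
`tᵃ ≡ -tᵇ mod Δₙ` for some integers `a, b` — if and only if `n = 0` or `n = -1`. -/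
theorem stmt12 (n : ℤ) :
    (∃ a b : ℤ, (LaurentPolynomial.T a + LaurentPolynomial.T b : LaurentPolynomial ℤ) ∈
      Ideal.span {DeltaL n}) ↔ (n = 0 ∨ n = -1) := by
  refine ⟨fun ⟨a, b, h⟩ ↦ eq_zero_or_eq_neg_one_of_T_add_T_mem_span_DeltaL h, ?_⟩
  rintro (rfl | rfl)
  · exact ⟨0, 0, span_DeltaL_zero ▸ Submodule.mem_top⟩
  · exact ⟨3, 0, T_three_add_T_zero_mem_span_DeltaL_neg_one⟩
end

section
/- Let $n = -k^2$ for an integer $k > 1$, and $\Lambda_n = \mathbb{Z}[t,t^{-1}]/(\Delta_n)$ where $\Delta_n = nt^2-(2n+1)t+n$. Then the element $k(t-1)$ is a unitary unit in $\Lambda_n$, i.e. $k(t-1)\cdot k(t^{-1}-1) = t^{-1}(nt^2 - 2nt + n) \equiv 1 \bmod \Delta_n$, and the four classes of $\{+1, -1, k(t-1), -k(t-1)\}$ in $U(\Lambda_n)/\{t^j\}_{j\in\mathbb{Z}}$ are pairwise distinct. -/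
/-- `Λₙ = ℤ[t,t⁻¹]/(Δₙ)`. -/
abbrev Lam (n : ℤ) := LaurentPolynomial ℤ ⧸ Ideal.span {DeltaL n}

/-- The quotient map `ℤ[t,t⁻¹] → Λₙ`. -/
noncomputable abbrev Qmk (n : ℤ) : LaurentPolynomial ℤ →+* Lam n := Ideal.Quotient.mk (Ideal.span {DeltaL n})

namespace Stmt14Aux

open LaurentPolynomial Complex

/-- The complex root `r = ((2k²-1) + √(4k²-1)·i)/(2k²)` of `Δₙ` for `n = -k²`. -/
noncomputable def rC (k : ℤ) : ℂ :=
  ((2*k^2-1 : ℝ)/(2*k^2) : ℝ) + ((Real.sqrt (4*k^2-1))/(2*k^2) : ℝ) * Complex.I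

theorem rC_conj (k : ℤ) (hk : 1 < k) : rC k * (starRingEnd ℂ) (rC k) = 1 := by
  have hk' : (1:ℝ) < (k:ℝ) := by exact_mod_cast hk
  have hk0 : (k:ℝ) ≠ 0 := by nlinarith
  have hs : Real.sqrt (4*(k:ℝ)^2-1) ^ 2 = 4*(k:ℝ)^2-1 := by
    rw [Real.sq_sqrt]; nlinarith
  rw [Complex.mul_conj, rC, Complex.normSq_add_mul_I]
  norm_cast
  push_cast
  field_simp
  nlinarith [hs, show Real.sqrt ((k:ℝ)^2*4-1)^2 = (k:ℝ)^2*4-1 from by rw [Real.sq_sqrt]; nlinarith]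

theorem rC_add_conj (k : ℤ) (hk : 1 < k) :
    rC k + (starRingEnd ℂ) (rC k) = ((2*(k:ℝ)^2-1)/(k:ℝ)^2 : ℝ) := by
  have hk' : (1:ℝ) < (k:ℝ) := by exact_mod_cast hk
  have hk0 : (k:ℝ) ≠ 0 := by nlinarith
  rw [Complex.add_conj, rC]
  simp only [Complex.add_re, Complex.ofReal_re, Complex.mul_re, Complex.ofReal_im,
    Complex.I_re, Complex.I_im]
  push_cast
  field_simp
  ring

theorem rC_ne_zero (k : ℤ) (hk : 1 < k) : rC k ≠ 0 := by
  intro h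
  have := rC_conj k hk
  rw [h] at this
  simp at this

/-- `r` as a unit of `ℂ`. -/
noncomputable def rU (k : ℤ) (hk : 1 < k) : ℂˣ :=
  Units.mkOfMulEqOne (rC k) ((starRingEnd ℂ) (rC k)) (rC_conj k hk)

/-- The evaluation map `ℤ[t,t⁻¹] → ℂ`, `t ↦ r`. -/
noncomputable def phi (k : ℤ) (hk : 1 < k) : LaurentPolynomial ℤ →ₐ[ℤ] ℂ :=
  AddMonoidAlgebra.lift ℤ ℂ ℤ ((Units.coeHom ℂ).comp (zpowersHom ℂˣ (rU k hk)))

theorem phi_T (k : ℤ) (hk : 1 < k) (n : ℤ) : phi k hk (T n) = (rC k) ^ n := by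
  have : (T n : LaurentPolynomial ℤ) = AddMonoidAlgebra.single n 1 := rfl
  rw [phi, this]
  rw [AddMonoidAlgebra.lift_single]
  simp [zpowersHom, rU]

theorem phi_C (k : ℤ) (hk : 1 < k) (a : ℤ) : phi k hk (LaurentPolynomial.C a) = (a : ℂ) := by
  have : (LaurentPolynomial.C a : LaurentPolynomial ℤ) = AddMonoidAlgebra.single 0 a := rfl
  rw [phi, this, AddMonoidAlgebra.lift_single]
  simp

theorem phi_Delta (k : ℤ) (hk : 1 < k) : phi k hk (DeltaL (-(k^2))) = 0 := by
  have hk' : (1:ℝ) < (k:ℝ) := by exact_mod_cast hk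
  have hk0 : ((k:ℂ))^2 ≠ 0 := by
    intro h; simp at h; exact (by nlinarith : (k:ℝ) ≠ 0) (by exact_mod_cast h)
  have hr0 := rC_ne_zero k hk
  have h1 := rC_conj k hk
  have h2 := rC_add_conj k hk
  have hx : rC k ^ 2 + 1 = ((2*(k:ℂ)^2-1)/(k:ℂ)^2) * rC k := by
    have := congrArg (fun z => z * rC k) h2
    push_cast at this
    rw [add_mul] at this
    nth_rewrite 2 [mul_comm] at this
    rw [h1] at this
    linear_combination this
  rw [DeltaL]
  simp only [map_sub, map_add, map_mul, phi_T, phi_C]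
  push_cast
  rw [zpow_two, zpow_one]
  rw [div_mul_eq_mul_div, eq_div_iff hk0] at hx
  linear_combination -hx

theorem rC_zpow_ne (k : ℤ) (hk : 1 < k) (m : ℤ) : rC k ^ m ≠ -1 := by
  intro h
  have hr0 := rC_ne_zero k hk
  have hm0 : m ≠ 0 := by
    intro h0; rw [h0, zpow_zero] at h; norm_num at h
  have h2m : rC k ^ (2 * m) = 1 := by
    rw [mul_comm, zpow_mul, h]; norm_num
  set N : ℕ := (2 * m).natAbs with hN
  have hNne : N ≠ 0 := by simp [hN]; omega
  have hNpow : rC k ^ N = 1 := by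
    rcases Int.natAbs_eq (2 * m) with he | he
    · rw [← zpow_natCast, ← he, h2m]
    · rw [← zpow_natCast, ← neg_neg ((N:ℤ)), ← he, zpow_neg, h2m, inv_one]
  have hint : IsIntegral ℤ (rC k) := by
    refine ⟨Polynomial.X ^ N - 1, ?_, ?_⟩
    · apply Polynomial.monic_X_pow_sub_C
      exact hNne
    · simp [Polynomial.eval₂_sub, hNpow]
  have hinv : (rC k)⁻¹ = rC k ^ (N - 1) := by
    apply inv_eq_of_mul_eq_one_right
    rw [← pow_succ']
    rw [Nat.sub_add_cancel (Nat.one_le_iff_ne_zero.mpr hNne)]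
    exact hNpow
  have hinvint : IsIntegral ℤ ((rC k)⁻¹) := by
    rw [hinv]; exact hint.pow _
  have hsum : IsIntegral ℤ (rC k + (rC k)⁻¹) := hint.add hinvint
  have hconj : (starRingEnd ℂ) (rC k) = (rC k)⁻¹ :=
    eq_inv_of_mul_eq_one_left (by rw [mul_comm]; exact rC_conj k hk)
  have hval : rC k + (rC k)⁻¹ = algebraMap ℚ ℂ ((2*(k:ℚ)^2-1)/(k:ℚ)^2) := by
    rw [← hconj, rC_add_conj k hk]
    push_cast
    norm_num
  rw [hval] at hsum
  rw [isIntegral_algebraMap_iff (algebraMap ℚ ℂ).injective] at hsum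
  obtain ⟨y, hy⟩ := IsIntegrallyClosed.isIntegral_iff.mp hsum
  have hkQ : ((k:ℚ))^2 ≠ 0 := by
    have : (1:ℚ) < (k:ℚ) := by exact_mod_cast hk
    positivity
  have hy' : (y:ℚ) * (k:ℚ)^2 = 2*(k:ℚ)^2 - 1 := by
    rw [show ((y:ℚ)) = algebraMap ℤ ℚ y from rfl, hy]
    field_simp
  have hyZ : y * k^2 = 2*k^2 - 1 := by exact_mod_cast hy'
  have hdvd : k^2 ∣ 1 := ⟨2 - y, by linarith⟩
  have := Int.le_of_dvd one_pos hdvd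
  nlinarith

/-- Key identity: `k(t-1)·k(t⁻¹-1) - 1 = Δₙ · t⁻¹`. -/
theorem key1 (k : ℤ) :
    C k * (T 1 - 1) * (C k * (T (-1) - 1)) - 1 = DeltaL (-(k^2)) * T (-1) := by
  have hab : (T 1 : LaurentPolynomial ℤ) * T (-1) = 1 := by
    rw [← T_add]; norm_num
  have h2 : (T 2 : LaurentPolynomial ℤ) = T 1 * T 1 := by rw [← T_add]; norm_num
  simp only [DeltaL, h2, map_neg, map_pow, map_add, map_mul, map_one, map_ofNat]
  linear_combination (C k ^ 2 * T 1 - (C k ^ 2 - 1)) * hab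

/-- Key identity: `(k(t-1))² + t = -Δₙ`. -/
theorem key2 (k : ℤ) :
    C k * (T 1 - 1) * (C k * (T 1 - 1)) + T 1 = DeltaL (-(k^2)) * (-1) := by
  have h2 : (T 2 : LaurentPolynomial ℤ) = T 1 * T 1 := by rw [← T_add]; norm_num
  simp only [DeltaL, h2, map_neg, map_pow, map_add, map_mul, map_one, map_ofNat]
  ring

/-- No power of `t` is `-1` in `Λₙ`. -/
theorem Qmk_T_ne (k : ℤ) (hk : 1 < k) (m : ℤ) : Qmk (-(k^2)) (T m) ≠ -1 := by
  intro h
  have h' : Qmk (-(k^2)) (T m) = Qmk (-(k^2)) (-1) := by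
    rw [map_neg, map_one]; exact h
  have hmem : T m - (-1) ∈ Ideal.span {DeltaL (-(k^2))} := Ideal.Quotient.eq.mp h'
  obtain ⟨g, hg⟩ := Ideal.mem_span_singleton.mp hmem
  have := congrArg (phi k hk) hg
  rw [map_sub, map_neg, map_one, map_mul, phi_T, phi_Delta, zero_mul] at this
  have : rC k ^ m = -1 := by linear_combination this
  exact rC_zpow_ne k hk m this

end Stmt14Aux

open Stmt14Aux LaurentPolynomial in
set_option maxHeartbeats 1000000 in
/-- for `n = -k²` with `k > 1`, the element `k(t-1)` is a unitary unit of
`Λₙ` (indeed `k(t-1) · k(t⁻¹-1) = 1` in `Λₙ`), and the four classes of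
`{1, -1, k(t-1), -k(t-1)}` in `U(Λₙ)/{tʲ}` are pairwise distinct. -/
theorem stmt14 (k : ℤ) (hk : 1 < k) :
    Qmk (-(k ^ 2)) (LaurentPolynomial.C k * (LaurentPolynomial.T 1 - 1)) *
      Qmk (-(k ^ 2)) (LaurentPolynomial.C k * (LaurentPolynomial.T (-1) - 1)) = 1 ∧
    (¬ ∃ j : ℤ, (1 : Lam (-(k ^ 2))) = Qmk (-(k ^ 2)) (LaurentPolynomial.T j) * (-1)) ∧
    (¬ ∃ j : ℤ, (1 : Lam (-(k ^ 2))) = Qmk (-(k ^ 2)) (LaurentPolynomial.T j) *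
      Qmk (-(k ^ 2)) (LaurentPolynomial.C k * (LaurentPolynomial.T 1 - 1))) ∧
    (¬ ∃ j : ℤ, (1 : Lam (-(k ^ 2))) = Qmk (-(k ^ 2)) (LaurentPolynomial.T j) *
      (-Qmk (-(k ^ 2)) (LaurentPolynomial.C k * (LaurentPolynomial.T 1 - 1)))) ∧
    (¬ ∃ j : ℤ, (-1 : Lam (-(k ^ 2))) = Qmk (-(k ^ 2)) (LaurentPolynomial.T j) *
      Qmk (-(k ^ 2)) (LaurentPolynomial.C k * (LaurentPolynomial.T 1 - 1))) ∧
    (¬ ∃ j : ℤ, (-1 : Lam (-(k ^ 2))) = Qmk (-(k ^ 2)) (LaurentPolynomial.T j) *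
      (-Qmk (-(k ^ 2)) (LaurentPolynomial.C k * (LaurentPolynomial.T 1 - 1)))) ∧
    (¬ ∃ j : ℤ, Qmk (-(k ^ 2)) (LaurentPolynomial.C k * (LaurentPolynomial.T 1 - 1)) =
      Qmk (-(k ^ 2)) (LaurentPolynomial.T j) *
      (-Qmk (-(k ^ 2)) (LaurentPolynomial.C k * (LaurentPolynomial.T 1 - 1)))) := by
  set Q : LaurentPolynomial ℤ →+* Lam (-(k^2)) := Qmk (-(k^2)) with hQ
  set u : Lam (-(k^2)) := Q (C k * (T 1 - 1)) with hu_def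
  set v : Lam (-(k^2)) := Q (C k * (T (-1) - 1)) with hv_def
  -- `u · v = 1`
  have hu : u * v = 1 := by
    have h0 : Q (C k * (T 1 - 1) * (C k * (T (-1) - 1)) - 1) = 0 :=
      Ideal.Quotient.eq_zero_iff_mem.mpr (Ideal.mem_span_singleton.mpr ⟨T (-1), key1 k⟩)
    rw [map_sub, map_mul, map_one, sub_eq_zero] at h0
    rw [hu_def, hv_def, ← map_mul]
    exact h0.trans rfl |>.symm ▸ h0
  -- `u² = -t`
  have husq : u * u = - Q (T 1) := by
    have h0 : Q (C k * (T 1 - 1) * (C k * (T 1 - 1)) + T 1) = 0 :=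
      Ideal.Quotient.eq_zero_iff_mem.mpr (Ideal.mem_span_singleton.mpr ⟨-1, key2 k⟩)
    rw [map_add, map_mul] at h0
    rw [hu_def, ← map_mul] at *
    linear_combination h0
  have hTmul : ∀ a b : ℤ, Q (T a) * Q (T b) = Q (T (a + b)) := by
    intro a b; rw [← map_mul, ← T_add]
  have hTsq : ∀ j : ℤ, Q (T (2*j+1)) = Q (T j) * Q (T j) * Q (T 1) := by
    intro j
    rw [hTmul j j, hTmul (j+j) 1]
    congr 1
    congr 1
    ring
  refine ⟨hu, ?_, ?_, ?_, ?_, ?_, ?_⟩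
  · rintro ⟨j, hj⟩
    exact Qmk_T_ne k hk j (by linear_combination hj)
  · rintro ⟨j, hj⟩
    refine Qmk_T_ne k hk (2*j+1) ?_
    linear_combination (hTsq j) + (Q (T j) * Q (T j)) * husq + (Q (T j) * u + 1) * hj
  · rintro ⟨j, hj⟩
    refine Qmk_T_ne k hk (2*j+1) ?_
    linear_combination (hTsq j) + (Q (T j) * Q (T j)) * husq + (1 - Q (T j) * u) * hj
  · rintro ⟨j, hj⟩
    refine Qmk_T_ne k hk (2*j+1) ?_
    linear_combination (hTsq j) + (Q (T j) * Q (T j)) * husq + (Q (T j) * u - 1) * hj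
  · rintro ⟨j, hj⟩
    refine Qmk_T_ne k hk (2*j+1) ?_
    linear_combination (hTsq j) + (Q (T j) * Q (T j)) * husq - (Q (T j) * u + 1) * hj
  · rintro ⟨j, hj⟩
    refine Qmk_T_ne k hk j ?_
    linear_combination v * hj - (1 + Q (T j)) * hu
end

section
/- Suppose $n = m(m+1)$ for some integer $m \geq 1$, so that $\Delta_n = ((m+1)t-m)(mt-(m+1))$ is reducible. Define ring homomorphisms $f_1, f_2 \colon \mathbb{Z}[t,t^{-1}] \to \mathbb{Z}[1/n]$ by $f_1(t) = m/(m+1)$ and $f_2(t) = (m+1)/m$. Then $f = f_1 \oplus f_2 \colon \mathbb{Z}[t,t^{-1}] \to \mathbb{Z}[1/n] \oplus \mathbb{Z}[1/n]$ has kernel exactly $(\Delta_n)$, and its image is the subring $S = \{(a,b) : b - a \in (2m+1)\cdot\mathbb{Z}[1/n]\}$. Hence $\Lambda_n = \mathbb{Z}[t,t^{-1}]/(\Delta_n) \cong S$. -/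
/-- `ℤ[1/n]`, the localization of `ℤ` inverting `n = m(m+1)`. -/
abbrev ZInv (m : ℤ) := Localization.Away ((m * (m + 1) : ℤ))

open Polynomial hiding eval₂
open LaurentPolynomial hiding C

namespace LaurentPolynomial

variable {R S S' : Type*} [CommRing R] [CommRing S] [CommRing S']

theorem comp_eval₂ (g : S →+* S') (f : R →+* S) (x : Sˣ) :
    g.comp (eval₂ f x) = eval₂ (g.comp f) (Units.map g.toMonoidHom x) := by
  refine IsLocalization.ringHom_ext (Submonoid.powers (X : R[X])) (Polynomial.ringHom_ext ?_ ?_)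
  · intro r; simp [-toLaurent_C]
  · simp [-toLaurent_X]

theorem map_eval₂ (g : S →+* S') (f : R →+* S) (x : Sˣ) (p : R[T;T⁻¹]) :
    g (eval₂ f x p) = eval₂ (g.comp f) (Units.map g.toMonoidHom x) p :=
  RingHom.congr_fun (comp_eval₂ g f x) p

theorem eval₂_sub_eval₂_mem_span (f : R →+* S) (x y : Sˣ) (p : R[T;T⁻¹]) :
    eval₂ f x p - eval₂ f y p ∈ Ideal.span {(x : S) - y} := by
  have hxy : Units.map (Ideal.Quotient.mk (Ideal.span {(x : S) - y})).toMonoidHom x =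
      Units.map (Ideal.Quotient.mk _).toMonoidHom y :=
    Units.ext (Ideal.Quotient.eq.2 (Ideal.mem_span_singleton_self _))
  rw [← Ideal.Quotient.eq, map_eval₂, map_eval₂]
  exact congrArg (fun z => eval₂ _ z p) hxy

theorem eval₂_toLaurent_C_mul_X_sub_C (f : R →+* S) (x : Sˣ) (a b : R) :
    eval₂ f x (toLaurent (Polynomial.C a * X - Polynomial.C b)) = f a * x - f b := by
  simp

end LaurentPolynomial

namespace Polynomial

theorem isPrimitive_C_mul_X_sub_C {a b : ℤ} (hab : IsCoprime a b) :
    (C a * X - C b).IsPrimitive := by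
  intro r hr
  rw [C_dvd_iff_dvd_coeff] at hr
  have h₁ : r ∣ a := by
    simpa only [coeff_sub, coeff_C_mul_X, coeff_C_of_ne_zero one_ne_zero, if_true, sub_zero]
      using hr 1
  have h₀ : r ∣ b := by simpa using hr 0
  exact hab.isUnit_of_dvd' h₁ h₀

theorem map_C_mul_X_sub_C_intCast {a b : ℤ} (ha : a ≠ 0) :
    (C a * X - C b).map (Int.castRingHom ℚ) = C (a : ℚ) * (X - C ((b : ℚ) / a)) := by
  have ha' : (a : ℚ) ≠ 0 := by exact_mod_cast ha
  rw [mul_sub, ← C_mul, mul_div_cancel₀ _ ha']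
  simp

theorem mul_dvd_of_isRoot_map {a b c d : ℤ} (hab : IsCoprime a b) (hcd : IsCoprime c d)
    (ha : a ≠ 0) (hc : c ≠ 0) (hne : (b : ℚ) / a ≠ d / c) {q : ℤ[X]}
    (h₁ : (q.map (Int.castRingHom ℚ)).IsRoot (b / a))
    (h₂ : (q.map (Int.castRingHom ℚ)).IsRoot (d / c)) :
    (C a * X - C b) * (C c * X - C d) ∣ q := by
  rw [IsPrimitive.Int.dvd_iff_map_cast_dvd_map_cast _ _
      ((isPrimitive_C_mul_X_sub_C hab).mul (isPrimitive_C_mul_X_sub_C hcd)), Polynomial.map_mul,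
    map_C_mul_X_sub_C_intCast ha, map_C_mul_X_sub_C_intCast hc, mul_mul_mul_comm, ← C_mul]
  have hunit : IsUnit (C ((a : ℚ) * c)) := isUnit_C.2 (by simp [ha, hc])
  have hcop : IsCoprime (X - C ((b : ℚ) / a)) (X - C ((d : ℚ) / c)) :=
    isCoprime_X_sub_C_of_isUnit_sub (sub_ne_zero.2 hne).isUnit
  exact hunit.mul_left_dvd.2 (hcop.mul_dvd (dvd_iff_isRoot.2 h₁) (dvd_iff_isRoot.2 h₂))

theorem toLaurent_mul_dvd_of_eval₂_eq_zero {a b c d : ℤ} (hab : IsCoprime a b)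
    (hcd : IsCoprime c d) (ha : a ≠ 0) (hc : c ≠ 0) (hne : (b : ℚ) / a ≠ d / c)
    {x y : ℚˣ} (hx : (x : ℚ) = b / a) (hy : (y : ℚ) = d / c) {p : ℤ[T;T⁻¹]}
    (h₁ : LaurentPolynomial.eval₂ (Int.castRingHom ℚ) x p = 0)
    (h₂ : LaurentPolynomial.eval₂ (Int.castRingHom ℚ) y p = 0) :
    toLaurent ((C a * X - C b) * (C c * X - C d) : ℤ[X]) ∣ p := by
  obtain ⟨k, q, hq⟩ := p.exists_T_pow
  have isRoot_of_eval₂ (z : ℚˣ)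
      (hz : LaurentPolynomial.eval₂ (Int.castRingHom ℚ) z p = 0) :
      (q.map (Int.castRingHom ℚ)).IsRoot z := by
    rw [IsRoot, eval_map, ← LaurentPolynomial.eval₂_toLaurent, hq, map_mul, hz, zero_mul]
  rw [← (isUnit_T (k : ℤ)).dvd_mul_right, ← hq]
  exact _root_.map_dvd _ (mul_dvd_of_isRoot_map hab hcd ha hc hne (hx ▸ isRoot_of_eval₂ x h₁)
    (hy ▸ isRoot_of_eval₂ y h₂))

end Polynomial

theorem IsLocalization.Away.surjective_of_mul_algebraMap_eq_one {A R : Type*} [CommRing A]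
    [CommRing R] [Algebra ℤ R] {r : ℤ} [IsLocalization.Away r R] (g : A →+* R) {w : A}
    (hw : g w * algebraMap ℤ R r = 1) : Function.Surjective g := by
  intro x
  obtain ⟨k, z, hx⟩ := IsLocalization.Away.surj r x
  refine ⟨z * w ^ k, ?_⟩
  calc g (z * w ^ k) = x * algebraMap ℤ R r ^ k * g w ^ k := by
        rw [map_mul, map_pow, map_intCast, ← eq_intCast (algebraMap ℤ R), hx]
    _ = x * (g w * algebraMap ℤ R r) ^ k := by ring
    _ = x := by rw [hw, one_pow, mul_one]

theorem RingHom.range_prod_eq_of_surjective {A R : Type*} [CommRing A] [CommRing R]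
    (g₁ g₂ : A →+* R) (I : Ideal R) (h₁ : Function.Surjective g₁)
    (hsub : ∀ p, g₂ p - g₁ p ∈ I) (hker : ∀ y ∈ I, ∃ p, g₁ p = 0 ∧ g₂ p = y) :
    Set.range (g₁.prod g₂) = {x | x.2 - x.1 ∈ I} := by
  ext x
  refine ⟨by rintro ⟨p, rfl⟩; exact hsub p, fun hx => ?_⟩
  obtain ⟨p, hp⟩ := h₁ x.1
  obtain ⟨q, hq₁, hq₂⟩ := hker _ (I.sub_mem hx (hsub p))
  refine ⟨p + q, Prod.ext ?_ ?_⟩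
  · show g₁ (p + q) = x.1
    rw [map_add, hq₁, hp, add_zero]
  · show g₂ (p + q) = x.2
    rw [map_add, hq₂, hp]
    ring

theorem deltaL_mul_add_one (m : ℤ) : DeltaL (m * (m + 1)) =
    toLaurent ((C (m + 1) * X - C m) * (C m * X - C (m + 1)) : ℤ[X]) := by
  rw [DeltaL, show 2 * (m * (m + 1)) + 1 = (m + 1) * (m + 1) + m * m by ring,
    show (T 2 : ℤ[T;T⁻¹]) = T 1 * T 1 by rw [← T_add]; rfl]
  simp only [map_mul, map_sub, map_add, Polynomial.toLaurent_C, Polynomial.toLaurent_X]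
  ring

namespace ZInv

variable (m : ℤ)

theorem isUnit_algebraMap_self : IsUnit (algebraMap ℤ (ZInv m) m) :=
  isUnit_of_mul_isUnit_left <| (map_mul (algebraMap ℤ (ZInv m)) m (m + 1)) ▸
    IsLocalization.Away.algebraMap_isUnit _

theorem isUnit_algebraMap_add_one : IsUnit (algebraMap ℤ (ZInv m) (m + 1)) :=
  isUnit_of_mul_isUnit_right <| (map_mul (algebraMap ℤ (ZInv m)) m (m + 1)) ▸
    IsLocalization.Away.algebraMap_isUnit _

noncomputable def ratio : (ZInv m)ˣ :=
  (isUnit_algebraMap_self m).unit * (isUnit_algebraMap_add_one m).unit⁻¹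

theorem val_ratio : (ratio m : ZInv m) =
    algebraMap ℤ (ZInv m) m * Ring.inverse (algebraMap ℤ (ZInv m) (m + 1)) := by
  rw [ratio, Units.val_mul, IsUnit.unit_spec, ← Ring.inverse_unit, IsUnit.unit_spec]

theorem val_ratio_inv : ((ratio m)⁻¹ : (ZInv m)ˣ) =
    algebraMap ℤ (ZInv m) (m + 1) * Ring.inverse (algebraMap ℤ (ZInv m) m) := by
  rw [ratio, mul_inv_rev, inv_inv, Units.val_mul, IsUnit.unit_spec, ← Ring.inverse_unit,
    IsUnit.unit_spec, mul_comm]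

theorem ratio_add_inv_sub_two_mul :
    ((ratio m : ZInv m) + ↑(ratio m)⁻¹ - 2) * algebraMap ℤ (ZInv m) (m * (m + 1)) = 1 := by
  have hA := Ring.mul_inverse_cancel _ (isUnit_algebraMap_self m)
  have hB := Ring.mul_inverse_cancel _ (isUnit_algebraMap_add_one m)
  have hBA : algebraMap ℤ (ZInv m) (m + 1) = algebraMap ℤ (ZInv m) m + 1 := by simp
  rw [val_ratio, val_ratio_inv, map_mul]
  linear_combination
    algebraMap ℤ (ZInv m) m ^ 2 * hB + algebraMap ℤ (ZInv m) (m + 1) ^ 2 * hA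
      + (algebraMap ℤ (ZInv m) (m + 1) - algebraMap ℤ (ZInv m) m + 1) * hBA

theorem algebraMap_dvd_val_inv_sub_val_ratio :
    algebraMap ℤ (ZInv m) (2 * m + 1) ∣ ↑(ratio m)⁻¹ - ↑(ratio m) := by
  have hA := Ring.mul_inverse_cancel _ (isUnit_algebraMap_self m)
  have hB := Ring.mul_inverse_cancel _ (isUnit_algebraMap_add_one m)
  refine ⟨Ring.inverse (algebraMap ℤ (ZInv m) m) *
    Ring.inverse (algebraMap ℤ (ZInv m) (m + 1)), ?_⟩
  rw [val_ratio, val_ratio_inv, show 2 * m + 1 = (m + 1) * (m + 1) - m * m by ring, map_sub,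
    map_mul, map_mul]
  linear_combination
    algebraMap ℤ (ZInv m) m * Ring.inverse (algebraMap ℤ (ZInv m) (m + 1)) * hA
      - algebraMap ℤ (ZInv m) (m + 1) * Ring.inverse (algebraMap ℤ (ZInv m) m) * hB

theorem eval₂_ratio_factor :
    eval₂ (algebraMap ℤ (ZInv m)) (ratio m) (toLaurent (C (m + 1) * X - C m)) = 0 := by
  have hB := Ring.mul_inverse_cancel _ (isUnit_algebraMap_add_one m)
  rw [eval₂_toLaurent_C_mul_X_sub_C, val_ratio]
  linear_combination algebraMap ℤ (ZInv m) m * hB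

theorem eval₂_ratio_inv_factor :
    eval₂ (algebraMap ℤ (ZInv m)) (ratio m)⁻¹ (toLaurent (C m * X - C (m + 1))) = 0 := by
  have hA := Ring.mul_inverse_cancel _ (isUnit_algebraMap_self m)
  rw [eval₂_toLaurent_C_mul_X_sub_C, val_ratio_inv]
  linear_combination algebraMap ℤ (ZInv m) (m + 1) * hA

theorem eval₂_ratio_inv_factor_mul :
    eval₂ (algebraMap ℤ (ZInv m)) (ratio m)⁻¹ (toLaurent (C (m + 1) * X - C m)) *
      algebraMap ℤ (ZInv m) m = algebraMap ℤ (ZInv m) (2 * m + 1) := by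
  have hA := Ring.mul_inverse_cancel _ (isUnit_algebraMap_self m)
  rw [eval₂_toLaurent_C_mul_X_sub_C, val_ratio_inv,
    show 2 * m + 1 = (m + 1) * (m + 1) - m * m by ring, map_sub, map_mul, map_mul]
  linear_combination (algebraMap ℤ (ZInv m) (m + 1)) ^ 2 * hA

theorem eval₂_surjective {u : (ZInv m)ˣ}
    (hu : ((u : ZInv m) + ↑u⁻¹ - 2) * algebraMap ℤ (ZInv m) (m * (m + 1)) = 1) :
    Function.Surjective (eval₂ (algebraMap ℤ (ZInv m)) u) :=
  IsLocalization.Away.surjective_of_mul_algebraMap_eq_one _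
    (w := (T 1 + T (-1) - 2 : ℤ[T;T⁻¹]))
    (by rwa [map_sub, map_add, eval₂_T, eval₂_T, zpow_one, zpow_neg_one, map_ofNat])

noncomputable def evalPair : ℤ[T;T⁻¹] →+* ZInv m × ZInv m :=
  (eval₂ (algebraMap ℤ (ZInv m)) (ratio m)).prod
    (eval₂ (algebraMap ℤ (ZInv m)) (ratio m)⁻¹)

theorem evalPair_T_one :
    evalPair m (T 1) = ((ratio m : ZInv m), (((ratio m)⁻¹ : (ZInv m)ˣ) : ZInv m)) := by
  simp [evalPair]

theorem ker_evalPair (hn : m * (m + 1) ≠ 0) :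
    RingHom.ker (evalPair m) = Ideal.span {DeltaL (m * (m + 1))} := by
  obtain ⟨hm, hm₁⟩ := mul_ne_zero_iff.1 hn
  -- any ring map to `ℚ` will do: on `ℤ` it is forced to be the cast
  have J : ZInv m →+* ℚ := IsLocalization.Away.lift (m * (m + 1)) (g := Int.castRingHom ℚ)
    (by rw [isUnit_iff_ne_zero, eq_intCast]; exact_mod_cast hn)
  have hJ_eval₂ (u : (ZInv m)ˣ) (p : ℤ[T;T⁻¹]) :
      J (eval₂ (algebraMap ℤ (ZInv m)) u p) =
        eval₂ (Int.castRingHom ℚ) (Units.map J.toMonoidHom u) p := by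
    rw [map_eval₂, RingHom.ext_int (J.comp _) (Int.castRingHom ℚ)]
  have hJ_ratio : ((Units.map J.toMonoidHom (ratio m) : ℚˣ) : ℚ) = m / (m + 1) := by
    simp [ratio, div_eq_mul_inv]
  have hJ_ratio_inv : ((Units.map J.toMonoidHom (ratio m)⁻¹ : ℚˣ) : ℚ) = (m + 1) / m := by
    simp [ratio, div_eq_mul_inv]
  apply le_antisymm
  · intro p hp
    rw [RingHom.mem_ker, evalPair, RingHom.prod_apply, Prod.mk_eq_zero] at hp
    rw [Ideal.mem_span_singleton, deltaL_mul_add_one]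
    refine toLaurent_mul_dvd_of_eval₂_eq_zero ⟨1, -1, by ring⟩ ⟨-1, 1, by ring⟩
      (by exact_mod_cast hm₁) (by exact_mod_cast hm) ?_ (by exact_mod_cast hJ_ratio)
      (by exact_mod_cast hJ_ratio_inv) ?_ ?_
    · rw [Ne, div_eq_div_iff (by exact_mod_cast hm₁) (by exact_mod_cast hm)]
      norm_cast
      intro h
      have : 2 * m + 1 = 0 := by linarith
      omega
    · rw [← hJ_eval₂ _ p, hp.1, map_zero]
    · rw [← hJ_eval₂ _ p, hp.2, map_zero]
  · rw [Ideal.span_le, Set.singleton_subset_iff, SetLike.mem_coe, RingHom.mem_ker,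
      deltaL_mul_add_one, evalPair, RingHom.prod_apply]
    simp only [map_mul, eval₂_ratio_factor, eval₂_ratio_inv_factor, zero_mul, mul_zero,
      Prod.mk_zero_zero]

theorem range_evalPair : Set.range (evalPair m) =
    {x | x.2 - x.1 ∈ Ideal.span {algebraMap ℤ (ZInv m) (2 * m + 1)}} := by
  have surj₂ : Function.Surjective (eval₂ (algebraMap ℤ (ZInv m)) (ratio m)⁻¹) :=
    eval₂_surjective m (u := (ratio m)⁻¹) <| by
      rw [inv_inv, add_comm (((ratio m)⁻¹ : (ZInv m)ˣ) : ZInv m)]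
      exact ratio_add_inv_sub_two_mul m
  refine RingHom.range_prod_eq_of_surjective _ _ _
    (eval₂_surjective m (ratio_add_inv_sub_two_mul m))
    (fun p => Ideal.span_singleton_le_span_singleton.2 (algebraMap_dvd_val_inv_sub_val_ratio m)
      (eval₂_sub_eval₂_mem_span _ _ _ p)) fun y hy => ?_
  obtain ⟨c, rfl⟩ := Ideal.mem_span_singleton.1 hy
  obtain ⟨r, hr⟩ := surj₂ (algebraMap ℤ (ZInv m) m * c)
  refine ⟨toLaurent (C (m + 1) * X - C m) * r, ?_, ?_⟩
  · rw [map_mul, eval₂_ratio_factor, zero_mul]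
  · rw [map_mul, hr, ← mul_assoc, eval₂_ratio_inv_factor_mul]

end ZInv

/-- for `n = m(m+1)` (`m ≥ 1`), the homomorphism
`f = f₁ ⊕ f₂ : ℤ[t,t⁻¹] → ℤ[1/n] ⊕ ℤ[1/n]` with `f₁(t) = m/(m+1)`, `f₂(t) = (m+1)/m`
has kernel exactly `(Δₙ)` and image the subring `S = {(a,b) : b - a ∈ (2m+1)·ℤ[1/n]}`;
hence `Λₙ ≅ S`. -/
theorem stmt16 (m : ℤ) (hm : 1 ≤ m) :
    ∃ f : LaurentPolynomial ℤ →+* (ZInv m × ZInv m),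
      f (LaurentPolynomial.T 1) =
        (algebraMap ℤ (ZInv m) m * Ring.inverse (algebraMap ℤ (ZInv m) (m + 1)),
         algebraMap ℤ (ZInv m) (m + 1) * Ring.inverse (algebraMap ℤ (ZInv m) m)) ∧
      RingHom.ker f = Ideal.span {DeltaL (m * (m + 1))} ∧
      Set.range f = {x : ZInv m × ZInv m |
        ∃ c : ZInv m, x.2 - x.1 = algebraMap ℤ (ZInv m) (2 * m + 1) * c} := by
  refine ⟨ZInv.evalPair m, ?_, ZInv.ker_evalPair m (mul_ne_zero (by omega) (by omega)), ?_⟩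
  · rw [ZInv.evalPair_T_one, ZInv.val_ratio, ZInv.val_ratio_inv]
  · rw [ZInv.range_evalPair]
    ext x
    exact Ideal.mem_span_singleton
end
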